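/- The function H : ℝ × ℝ^{[K]×𝒮} → ℝ defined by H(λ,γ) := Σ_{k∈[K]} Σ_{s∈𝒮} E[(π_s(p_k(X,S) − λ) − γ_{k,s})_+ | S = s] + λβ, where (u)_+ := max(u,0), is convex; moreover its restriction to Δ := {(λ,γ) ∈ ℝ × ℝ^{[K]×𝒮} : λ ≥ 0, Σ_{s∈𝒮} γ_{k,s} = 0 for every k ∈ [K]} is coercive: for every sequence ((λ_m,γ_m))_{m≥0} in Δ whose Euclidean norm tends to infinity, H(λ_m,γ_m) → ∞. In particular, H attains its infimum over Δ. -/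

import Mathlib

open MeasureTheory Set Filter

noncomputable section

section Defs

variable {𝒳 𝒮 : Type*} [MeasurableSpace 𝒳] [MeasurableSpace 𝒮] {K : ℕ}

/-- `π_s := ℙ(S = s)`. -/
def probS (μ : Measure (𝒳 × 𝒮 × Fin K)) (s : 𝒮) : ℝ :=
  (μ {ω | ω.2.1 = s}).toReal

/-- `ℙ(A | S = s) := ℙ(A ∩ {S = s}) / π_s`. -/
def condProb (μ : Measure (𝒳 × 𝒮 × Fin K)) (A : Set (𝒳 × 𝒮 × Fin K)) (s : 𝒮) : ℝ :=
  (μ (A ∩ {ω | ω.2.1 = s})).toReal / probS μ s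

/-- Conditional expectation `E[f(X,S,Y) | S = s]`. -/
def condMean (μ : Measure (𝒳 × 𝒮 × Fin K)) (f : 𝒳 × 𝒮 × Fin K → ℝ) (s : 𝒮) : ℝ :=
  (∫ ω in {ω : 𝒳 × 𝒮 × Fin K | ω.2.1 = s}, f ω ∂μ) / probS μ s

/-- The event `{k ∈ Γ(X,S)}`. -/
def memEvent (Γ : 𝒳 → 𝒮 → Set (Fin K)) (k : Fin K) : Set (𝒳 × 𝒮 × Fin K) :=
  {ω | k ∈ Γ ω.1 ω.2.1}

/-- A set-valued classifier: each membership set is measurable. -/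
def IsClassifier (Γ : 𝒳 → 𝒮 → Set (Fin K)) : Prop :=
  ∀ k : Fin K, MeasurableSet {q : 𝒳 × 𝒮 | k ∈ Γ q.1 q.2}

/-- Risk `R(Γ) := ℙ(Y ∉ Γ(X,S))`. -/
def risk (μ : Measure (𝒳 × 𝒮 × Fin K)) (Γ : 𝒳 → 𝒮 → Set (Fin K)) : ℝ :=
  (μ {ω | ω.2.2 ∉ Γ ω.1 ω.2.1}).toReal

/-- Expected size `𝒯(Γ) := E[|Γ(X,S)|]`. -/
def expSize (μ : Measure (𝒳 × 𝒮 × Fin K)) (Γ : 𝒳 → 𝒮 → Set (Fin K)) : ℝ :=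
  ∫ ω, ((Γ ω.1 ω.2.1).ncard : ℝ) ∂μ

/-- Demographic parity: `ℙ(k ∈ Γ(X,S) | S = s) = ℙ(k ∈ Γ(X,S))` for all `k, s`. -/
def DPfair (μ : Measure (𝒳 × 𝒮 × Fin K)) (Γ : 𝒳 → 𝒮 → Set (Fin K)) : Prop :=
  ∀ (k : Fin K) (s : 𝒮), condProb μ (memEvent Γ k) s = (μ (memEvent Γ k)).toReal

/-- Unfairness measure `𝒰(Γ)`. -/
def unfairness (μ : Measure (𝒳 × 𝒮 × Fin K)) (Γ : 𝒳 → 𝒮 → Set (Fin K)) : ℝ :=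
  ⨆ k : Fin K, ⨆ s : 𝒮, ⨆ s' : 𝒮,
    |condProb μ (memEvent Γ k) s - condProb μ (memEvent Γ k) s'|

/-- Conditional cdf `F_{k,s}(t) := ℙ(p_k(X,S) ≤ t | S = s)`. -/
def Fks (μ : Measure (𝒳 × 𝒮 × Fin K)) (p : Fin K → 𝒳 → 𝒮 → ℝ) (k : Fin K) (s : 𝒮) (t : ℝ) : ℝ :=
  condProb μ {ω | p k ω.1 ω.2.1 ≤ t} s

/-- cdf `F_k(t) := ℙ(p_k(X,S) ≤ t)`. -/
def Fk (μ : Measure (𝒳 × 𝒮 × Fin K)) (p : Fin K → 𝒳 → 𝒮 → ℝ) (k : Fin K) (t : ℝ) : ℝ :=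
  (μ {ω | p k ω.1 ω.2.1 ≤ t}).toReal

/-- `G(t) := Σ_k (1 - F_k(t))`. -/
def Gfun (μ : Measure (𝒳 × 𝒮 × Fin K)) (p : Fin K → 𝒳 → 𝒮 → ℝ) (t : ℝ) : ℝ :=
  ∑ k : Fin K, (1 - Fk μ p k t)

/-- Assumption 1 (continuity of all the conditional cdfs `F_{k,s}`). -/
def Assumption1 (μ : Measure (𝒳 × 𝒮 × Fin K)) (p : Fin K → 𝒳 → 𝒮 → ℝ) : Prop :=
  ∀ (k : Fin K) (s : 𝒮), Continuous (fun t => Fks μ p k s t)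

/-- Thresholding (oracle) classifier `{k : p_k(x,s) ≥ λ + γ_{k,s}/π_s}`. -/
def oracle (μ : Measure (𝒳 × 𝒮 × Fin K)) (p : Fin K → 𝒳 → 𝒮 → ℝ)
    (lam : ℝ) (γ : Fin K → 𝒮 → ℝ) : 𝒳 → 𝒮 → Set (Fin K) :=
  fun x s => {k | lam + γ k s / probS μ s ≤ p k x s}

/-- The objective `H(λ,γ)`. -/
def Hfun [Fintype 𝒮] (μ : Measure (𝒳 × 𝒮 × Fin K)) (p : Fin K → 𝒳 → 𝒮 → ℝ) (β : ℝ)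
    (lam : ℝ) (γ : Fin K → 𝒮 → ℝ) : ℝ :=
  (∑ k : Fin K, ∑ s : 𝒮,
      condMean μ (fun ω => max (probS μ s * (p k ω.1 ω.2.1 - lam) - γ k s) 0) s) + lam * β

/-- Lagrangian risk `R_{λ,γ}(Γ)`. -/
def lagRisk [Fintype 𝒮] (μ : Measure (𝒳 × 𝒮 × Fin K)) (β lam : ℝ) (γ : Fin K → 𝒮 → ℝ)
    (Γ : 𝒳 → 𝒮 → Set (Fin K)) : ℝ :=
  risk μ Γ + lam * (expSize μ Γ - β) +
    ∑ k : Fin K, ∑ s : 𝒮, γ k s * condProb μ (memEvent Γ k) s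

end Defs

/-- Generalized inverse `h⁻¹(u) := inf {t | h t ≤ u}` of a nonincreasing function. -/
def ginv (h : ℝ → ℝ) (u : ℝ) : ℝ := sInf {t | h t ≤ u}

/-- The constraint set `Δ`. -/
def Δset (K : ℕ) (𝒮 : Type*) [Fintype 𝒮] : Set (ℝ × (Fin K → 𝒮 → ℝ)) :=
  {q | 0 ≤ q.1 ∧ ∀ k : Fin K, ∑ s : 𝒮, q.2 k s = 0}

section AuxH

lemma convexOn_univ_sum {ι E : Type*} [AddCommMonoid E] [Module ℝ E] (t : Finset ι)
    (f : ι → E → ℝ) (h : ∀ i ∈ t, ConvexOn ℝ Set.univ (f i)) :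
    ConvexOn ℝ Set.univ (fun x => ∑ i ∈ t, f i x) := by
  classical
  induction t using Finset.induction_on with
  | empty => simpa using convexOn_const (0:ℝ) convex_univ
  | @insert a tt hnot ih =>
    simp only [Finset.sum_insert hnot]
    exact (h a (Finset.mem_insert_self a tt)).add
      (ih fun i hi => h i (Finset.mem_insert_of_mem hi))

variable {𝒳 𝒮 : Type*} [MeasurableSpace 𝒳] [MeasurableSpace 𝒮] [MeasurableSingletonClass 𝒮]
  {K : ℕ}

lemma measSetS (s : 𝒮) : MeasurableSet {ω : 𝒳 × 𝒮 × Fin K | ω.2.1 = s} :=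
  (measurable_fst.comp measurable_snd) (measurableSet_singleton s)

lemma integAux (μ : Measure (𝒳 × 𝒮 × Fin K)) [IsFiniteMeasure μ]
    (g : 𝒳 × 𝒮 × Fin K → ℝ) (hg : Measurable g) (B : ℝ) (hB : ∀ ω, |g ω| ≤ B)
    (S : Set (𝒳 × 𝒮 × Fin K)) :
    IntegrableOn (fun ω => max (g ω) 0) S μ := by
  refine Integrable.mono' (integrable_const B)
    ((hg.max measurable_const).aestronglyMeasurable) (ae_of_all _ fun ω => ?_)
  rw [Real.norm_eq_abs, abs_of_nonneg (le_max_right _ _)]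
  exact max_le ((le_abs_self _).trans (hB ω)) ((abs_nonneg _).trans (hB ω))

lemma term_integrable (μ : Measure (𝒳 × 𝒮 × Fin K)) [IsFiniteMeasure μ]
    (p : Fin K → 𝒳 → 𝒮 → ℝ) (hpmeas : ∀ k, Measurable fun q : 𝒳 × 𝒮 => p k q.1 q.2)
    (hp01 : ∀ k x s, p k x s ∈ Icc (0:ℝ) 1) (k : Fin K) (s : 𝒮) (l g : ℝ) :
    IntegrableOn (fun ω : 𝒳 × 𝒮 × Fin K => max (probS μ s * (p k ω.1 ω.2.1 - l) - g) 0)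
      {ω : 𝒳 × 𝒮 × Fin K | ω.2.1 = s} μ := by
  have hπ0 : 0 ≤ probS μ s := ENNReal.toReal_nonneg
  have hm : Measurable fun ω : 𝒳 × 𝒮 × Fin K => p k ω.1 ω.2.1 :=
    (hpmeas k).comp (measurable_fst.prodMk (measurable_fst.comp measurable_snd))
  refine integAux μ _ (((hm.sub_const l).const_mul _).sub_const g)
    (probS μ s * (1 + |l|) + |g|) (fun ω => ?_) _
  have h1 := (hp01 k ω.1 ω.2.1).1
  have h2 := (hp01 k ω.1 ω.2.1).2
  have hp : |p k ω.1 ω.2.1 - l| ≤ 1 + |l| := by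
    refine (abs_sub _ _).trans ?_
    have : |p k ω.1 ω.2.1| ≤ 1 := abs_le.mpr ⟨by linarith, h2⟩
    linarith
  calc |probS μ s * (p k ω.1 ω.2.1 - l) - g|
      ≤ |probS μ s * (p k ω.1 ω.2.1 - l)| + |g| := abs_sub _ _
    _ = probS μ s * |p k ω.1 ω.2.1 - l| + |g| := by rw [abs_mul, abs_of_nonneg hπ0]
    _ ≤ probS μ s * (1 + |l|) + |g| := by
        have := mul_le_mul_of_nonneg_left hp hπ0; linarith

lemma term_nonneg (μ : Measure (𝒳 × 𝒮 × Fin K)) (p : Fin K → 𝒳 → 𝒮 → ℝ)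
    (k : Fin K) (s : 𝒮) (l g : ℝ) :
    0 ≤ condMean μ (fun ω => max (probS μ s * (p k ω.1 ω.2.1 - l) - g) 0) s :=
  div_nonneg (setIntegral_nonneg (measSetS s) fun ω _ => le_max_right _ _)
    ENNReal.toReal_nonneg

lemma term_lb (μ : Measure (𝒳 × 𝒮 × Fin K)) [IsFiniteMeasure μ]
    (p : Fin K → 𝒳 → 𝒮 → ℝ) (hpmeas : ∀ k, Measurable fun q : 𝒳 × 𝒮 => p k q.1 q.2)
    (hp01 : ∀ k x s, p k x s ∈ Icc (0:ℝ) 1) (k : Fin K) (s : 𝒮) (l g : ℝ)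
    (hπ : 0 < probS μ s) :
    -(probS μ s * l) - g
      ≤ condMean μ (fun ω => max (probS μ s * (p k ω.1 ω.2.1 - l) - g) 0) s := by
  set S := {ω : 𝒳 × 𝒮 × Fin K | ω.2.1 = s} with hS
  set c : ℝ := -(probS μ s * l) - g with hc
  have hpt : ∀ ω ∈ S, c ≤ max (probS μ s * (p k ω.1 ω.2.1 - l) - g) 0 := by
    intro ω _
    refine le_trans ?_ (le_max_left _ _)
    have h1 := (hp01 k ω.1 ω.2.1).1
    nlinarith [mul_nonneg hπ.le h1]
  have hmono : ∫ ω in S, c ∂μ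
      ≤ ∫ ω in S, max (probS μ s * (p k ω.1 ω.2.1 - l) - g) 0 ∂μ :=
    setIntegral_mono_on (integrableOn_const (measure_lt_top μ S).ne)
      (term_integrable μ p hpmeas hp01 k s l g) (measSetS s) hpt
  rw [setIntegral_const, smul_eq_mul] at hmono
  have hμS : μ.real S = probS μ s := rfl
  rw [hμS] at hmono
  unfold condMean
  have hceq : c = probS μ s * c / probS μ s := (mul_div_cancel_left₀ c hπ.ne').symm
  rw [hceq]
  exact (div_le_div_iff_of_pos_right hπ).mpr hmono

lemma term_convex [Fintype 𝒮] (μ : Measure (𝒳 × 𝒮 × Fin K)) [IsFiniteMeasure μ]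
    (p : Fin K → 𝒳 → 𝒮 → ℝ) (hpmeas : ∀ k, Measurable fun q : 𝒳 × 𝒮 => p k q.1 q.2)
    (hp01 : ∀ k x s, p k x s ∈ Icc (0:ℝ) 1) (k : Fin K) (s : 𝒮) (hπ : 0 < probS μ s) :
    ConvexOn ℝ Set.univ (fun q : ℝ × (Fin K → 𝒮 → ℝ) =>
      condMean μ (fun ω => max (probS μ s * (p k ω.1 ω.2.1 - q.1) - q.2 k s) 0) s) := by
  refine ⟨convex_univ, fun x _ y _ a b ha hb hab => ?_⟩
  set S := {ω : 𝒳 × 𝒮 × Fin K | ω.2.1 = s} with hS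
  have hix := term_integrable μ p hpmeas hp01 k s x.1 (x.2 k s)
  have hiy := term_integrable μ p hpmeas hp01 k s y.1 (y.2 k s)
  have hiz := term_integrable μ p hpmeas hp01 k s (a • x + b • y).1 ((a • x + b • y).2 k s)
  have key : ∀ ω ∈ S,
      max (probS μ s * (p k ω.1 ω.2.1 - (a • x + b • y).1) - (a • x + b • y).2 k s) 0
        ≤ a * max (probS μ s * (p k ω.1 ω.2.1 - x.1) - x.2 k s) 0
          + b * max (probS μ s * (p k ω.1 ω.2.1 - y.1) - y.2 k s) 0 := by
    intro ω _
    have h1 : (a • x + b • y).1 = a * x.1 + b * y.1 := rfl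
    have h2 : (a • x + b • y).2 k s = a * x.2 k s + b * y.2 k s := rfl
    rw [h1, h2]
    have heq : probS μ s * (p k ω.1 ω.2.1 - (a * x.1 + b * y.1)) - (a * x.2 k s + b * y.2 k s)
        = a * (probS μ s * (p k ω.1 ω.2.1 - x.1) - x.2 k s)
          + b * (probS μ s * (p k ω.1 ω.2.1 - y.1) - y.2 k s) := by
      linear_combination (-(probS μ s * p k ω.1 ω.2.1)) * hab
    rw [heq]
    refine max_le (add_le_add (mul_le_mul_of_nonneg_left (le_max_left _ _) ha)
      (mul_le_mul_of_nonneg_left (le_max_left _ _) hb)) ?_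
    exact add_nonneg (mul_nonneg ha (le_max_right _ _)) (mul_nonneg hb (le_max_right _ _))
  have hmono : ∫ ω in S,
        max (probS μ s * (p k ω.1 ω.2.1 - (a • x + b • y).1) - (a • x + b • y).2 k s) 0 ∂μ
      ≤ ∫ ω in S,
          (a * max (probS μ s * (p k ω.1 ω.2.1 - x.1) - x.2 k s) 0
            + b * max (probS μ s * (p k ω.1 ω.2.1 - y.1) - y.2 k s) 0) ∂μ :=
    setIntegral_mono_on hiz ((hix.const_mul a).add (hiy.const_mul b)) (measSetS s) key
  rw [integral_add (hix.const_mul a) (hiy.const_mul b), integral_const_mul,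
    integral_const_mul] at hmono
  show condMean μ (fun ω => max (probS μ s * (p k ω.1 ω.2.1 - (a • x + b • y).1)
      - (a • x + b • y).2 k s) 0) s
    ≤ a • condMean μ (fun ω => max (probS μ s * (p k ω.1 ω.2.1 - x.1) - x.2 k s) 0) s
      + b • condMean μ (fun ω => max (probS μ s * (p k ω.1 ω.2.1 - y.1) - y.2 k s) 0) s
  unfold condMean
  rw [smul_eq_mul, smul_eq_mul, mul_div_assoc', mul_div_assoc', ← add_div]
  exact (div_le_div_iff_of_pos_right hπ).mpr hmono

end AuxH

theorem statement0
    {𝒳 𝒮 : Type*} [MeasurableSpace 𝒳] [MeasurableSpace 𝒮] [MeasurableSingletonClass 𝒮]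
    [Fintype 𝒮] [Nonempty 𝒮] {K : ℕ} (hK : 2 ≤ K)
    (μ : Measure (𝒳 × 𝒮 × Fin K)) (hμ : IsProbabilityMeasure μ)
    (hπ : ∀ s : 𝒮, 0 < probS μ s)
    (p : Fin K → 𝒳 → 𝒮 → ℝ)
    (hpmeas : ∀ k, Measurable fun q : 𝒳 × 𝒮 => p k q.1 q.2)
    (hp01 : ∀ k x s, p k x s ∈ Icc (0:ℝ) 1)
    (hpsum : ∀ x s, ∑ k : Fin K, p k x s = 1)
    (hlink : ∀ (k : Fin K) (A : Set (𝒳 × 𝒮)), MeasurableSet A →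
      (μ {ω | ω.2.2 = k ∧ (ω.1, ω.2.1) ∈ A}).toReal
        = ∫ ω in {ω : 𝒳 × 𝒮 × Fin K | (ω.1, ω.2.1) ∈ A}, p k ω.1 ω.2.1 ∂μ)
    (β : ℝ) (hβ : 0 < β) :
    ConvexOn ℝ Set.univ (fun q : ℝ × (Fin K → 𝒮 → ℝ) => Hfun μ p β q.1 q.2) ∧
    (∀ seq : ℕ → ℝ × (Fin K → 𝒮 → ℝ), (∀ m, seq m ∈ Δset K 𝒮) →
      Tendsto (fun m => Real.sqrt ((seq m).1 ^ 2 + ∑ k : Fin K, ∑ s : 𝒮, ((seq m).2 k s) ^ 2))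
        atTop atTop →
      Tendsto (fun m => Hfun μ p β (seq m).1 (seq m).2) atTop atTop) ∧
    (∃ q ∈ Δset K 𝒮, ∀ r ∈ Δset K 𝒮, Hfun μ p β q.1 q.2 ≤ Hfun μ p β r.1 r.2) := by
  classical
  haveI := hμ
  set T : Fin K → 𝒮 → ℝ × (Fin K → 𝒮 → ℝ) → ℝ := fun k s q =>
    condMean μ (fun ω => max (probS μ s * (p k ω.1 ω.2.1 - q.1) - q.2 k s) 0) s with hT
  have hHeq : ∀ q : ℝ × (Fin K → 𝒮 → ℝ),
      Hfun μ p β q.1 q.2 = (∑ k : Fin K, ∑ s : 𝒮, T k s q) + q.1 * β := fun q => rfl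
  -- convexity
  have hconv : ConvexOn ℝ Set.univ (fun q : ℝ × (Fin K → 𝒮 → ℝ) => Hfun μ p β q.1 q.2) := by
    have hsum : ConvexOn ℝ Set.univ
        (fun q : ℝ × (Fin K → 𝒮 → ℝ) => ∑ k : Fin K, ∑ s : 𝒮, T k s q) :=
      convexOn_univ_sum _ _ fun k _ =>
        convexOn_univ_sum _ (fun s q => T k s q) fun s _ =>
          term_convex μ p hpmeas hp01 k s (hπ s)
    have hlin : ConvexOn ℝ Set.univ (fun q : ℝ × (Fin K → 𝒮 → ℝ) => q.1 * β) := by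
      refine ⟨convex_univ, fun x _ y _ a b ha hb hab => le_of_eq ?_⟩
      show ((a • x + b • y).1) * β = a • (x.1 * β) + b • (y.1 * β)
      simp only [Prod.fst_add, Prod.smul_fst, smul_eq_mul]
      ring
    exact hsum.add hlin
  -- constants
  have hπ1 : ∀ s : 𝒮, probS μ s ≤ 1 := by
    intro s
    have h1 : μ {ω : 𝒳 × 𝒮 × Fin K | ω.2.1 = s} ≤ 1 := prob_le_one
    have := ENNReal.toReal_mono (by simp) h1
    simpa [probS] using this
  set m : ℕ := Fintype.card 𝒮 with hmdef
  have hm1 : 1 ≤ (m : ℝ) := by exact_mod_cast Fintype.card_pos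
  set c : ℝ := (1 + β) / β with hcdef
  have hc : 0 < c := by positivity
  set C2 : ℝ := c ^ 2 + K * m * ((m : ℝ) * c) ^ 2 with hC2def
  have hC2 : 0 < C2 := by positivity
  set C : ℝ := Real.sqrt C2 with hCdef
  have hC : 0 < C := Real.sqrt_pos.mpr hC2
  -- nonnegativity of H on Δ
  have hTnn : ∀ (k : Fin K) (s : 𝒮) (q : ℝ × (Fin K → 𝒮 → ℝ)), 0 ≤ T k s q :=
    fun k s q => term_nonneg μ p k s q.1 (q.2 k s)
  have hsumnn : ∀ q : ℝ × (Fin K → 𝒮 → ℝ), 0 ≤ ∑ k : Fin K, ∑ s : 𝒮, T k s q :=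
    fun q => Finset.sum_nonneg fun k _ => Finset.sum_nonneg fun s _ => hTnn k s q
  have hHnn : ∀ q ∈ Δset K 𝒮, 0 ≤ Hfun μ p β q.1 q.2 := by
    intro q hq
    rw [hHeq]
    exact add_nonneg (hsumnn q) (mul_nonneg hq.1 hβ.le)
  -- key quantitative bound on Δ
  have hbound : ∀ q ∈ Δset K 𝒮,
      Real.sqrt (q.1 ^ 2 + ∑ k : Fin K, ∑ s : 𝒮, (q.2 k s) ^ 2)
        ≤ C * Hfun μ p β q.1 q.2 := by
    intro q hq
    obtain ⟨hlam, hγ⟩ := hq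
    set Hq := Hfun μ p β q.1 q.2 with hHqdef
    have hH0 : 0 ≤ Hq := hHnn q ⟨hlam, hγ⟩
    have hlamβ : q.1 * β ≤ Hq := by
      rw [hHqdef, hHeq]; exact le_add_of_nonneg_left (hsumnn q)
    have hlamdiv : q.1 ≤ Hq / β := (le_div_iff₀ hβ).mpr hlamβ
    have hcH : c * Hq = Hq / β + Hq := by rw [hcdef]; field_simp
    have hch : 0 ≤ c * Hq := mul_nonneg hc.le hH0
    have hlamle : q.1 ≤ c * Hq := by rw [hcH]; linarith
    have hTle : ∀ (k : Fin K) (s : 𝒮), T k s q ≤ Hq := by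
      intro k s
      have h1 : T k s q ≤ ∑ s' : 𝒮, T k s' q :=
        Finset.single_le_sum (fun s' _ => hTnn k s' q) (Finset.mem_univ s)
      have h2 : (∑ s' : 𝒮, T k s' q) ≤ ∑ k' : Fin K, ∑ s' : 𝒮, T k' s' q :=
        Finset.single_le_sum
          (fun k' _ => Finset.sum_nonneg fun s' _ => hTnn k' s' q) (Finset.mem_univ k)
      have h3 : 0 ≤ q.1 * β := mul_nonneg hlam hβ.le
      rw [hHqdef, hHeq]; linarith
    have hγlb : ∀ (k : Fin K) (s : 𝒮), -(c * Hq) ≤ q.2 k s := by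
      intro k s
      have hlb := term_lb μ p hpmeas hp01 k s q.1 (q.2 k s) (hπ s)
      have h1 : probS μ s * q.1 ≤ q.1 := mul_le_of_le_one_left hlam (hπ1 s)
      have h2 := hTle k s
      rw [hcH]; linarith
    have hγub : ∀ (k : Fin K) (s : 𝒮), q.2 k s ≤ (m : ℝ) * (c * Hq) := by
      intro k s
      have hsplit : q.2 k s + ∑ s' ∈ Finset.univ.erase s, q.2 k s' = 0 := by
        rw [Finset.add_sum_erase _ _ (Finset.mem_univ s)]
        exact hγ k
      have hlow : (∑ _s' ∈ Finset.univ.erase s, (-(c * Hq)))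
          ≤ ∑ s' ∈ Finset.univ.erase s, q.2 k s' :=
        Finset.sum_le_sum fun s' _ => hγlb k s'
      rw [Finset.sum_const, nsmul_eq_mul] at hlow
      have hcard : ((Finset.univ.erase s).card : ℝ) ≤ (m : ℝ) := by
        exact_mod_cast Finset.card_le_card (Finset.erase_subset _ _)
      have hmul := mul_le_mul_of_nonneg_right hcard hch
      have hneg : ((Finset.univ.erase s).card : ℝ) * (-(c * Hq))
          = -(((Finset.univ.erase s).card : ℝ) * (c * Hq)) := by ring
      rw [hneg] at hlow
      linarith
    have habs : ∀ (k : Fin K) (s : 𝒮), |q.2 k s| ≤ (m : ℝ) * (c * Hq) := by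
      intro k s
      refine abs_le.mpr ⟨?_, hγub k s⟩
      have h1 := hγlb k s
      nlinarith
    have hsq : ∀ (k : Fin K) (s : 𝒮), (q.2 k s) ^ 2 ≤ ((m : ℝ) * c) ^ 2 * Hq ^ 2 := by
      intro k s
      have h2 : (q.2 k s) ^ 2 ≤ ((m : ℝ) * (c * Hq)) ^ 2 := by
        rw [← sq_abs]
        exact pow_le_pow_left₀ (abs_nonneg _) (habs k s) 2
      calc (q.2 k s) ^ 2 ≤ ((m : ℝ) * (c * Hq)) ^ 2 := h2
        _ = ((m : ℝ) * c) ^ 2 * Hq ^ 2 := by ring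
    have hsumsq : (∑ k : Fin K, ∑ s : 𝒮, (q.2 k s) ^ 2)
        ≤ (K : ℝ) * (m : ℝ) * (((m : ℝ) * c) ^ 2 * Hq ^ 2) := by
      calc (∑ k : Fin K, ∑ s : 𝒮, (q.2 k s) ^ 2)
          ≤ ∑ _k : Fin K, ∑ _s : 𝒮, ((m : ℝ) * c) ^ 2 * Hq ^ 2 :=
            Finset.sum_le_sum fun k _ => Finset.sum_le_sum fun s _ => hsq k s
        _ = (K : ℝ) * (m : ℝ) * (((m : ℝ) * c) ^ 2 * Hq ^ 2) := by
            simp [Finset.sum_const, Finset.card_univ, hmdef]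
            ring
    have hlamsq : q.1 ^ 2 ≤ c ^ 2 * Hq ^ 2 := by
      have h := pow_le_pow_left₀ hlam hlamle 2
      calc q.1 ^ 2 ≤ (c * Hq) ^ 2 := h
        _ = c ^ 2 * Hq ^ 2 := by ring
    have htot : q.1 ^ 2 + (∑ k : Fin K, ∑ s : 𝒮, (q.2 k s) ^ 2) ≤ C2 * Hq ^ 2 := by
      rw [hC2def]; nlinarith
    calc Real.sqrt (q.1 ^ 2 + ∑ k : Fin K, ∑ s : 𝒮, (q.2 k s) ^ 2)
        ≤ Real.sqrt (C2 * Hq ^ 2) := Real.sqrt_le_sqrt htot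
      _ = C * Hq := by
          rw [Real.sqrt_mul hC2.le, Real.sqrt_sq hH0, hCdef]
  refine ⟨hconv, ?_, ?_⟩
  · -- coercivity
    intro seq hmem hN
    have hle : ∀ mm : ℕ,
        Real.sqrt ((seq mm).1 ^ 2 + ∑ k : Fin K, ∑ s : 𝒮, ((seq mm).2 k s) ^ 2) / C
          ≤ Hfun μ p β (seq mm).1 (seq mm).2 := by
      intro mm
      rw [div_le_iff₀ hC, mul_comm]
      exact hbound _ (hmem mm)
    exact tendsto_atTop_mono hle (hN.atTop_div_const hC)
  · -- existence of a minimizer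
    have hcont : Continuous (fun q : ℝ × (Fin K → 𝒮 → ℝ) => Hfun μ p β q.1 q.2) :=
      hconv.locallyLipschitz.continuous
    set q₀ : ℝ × (Fin K → 𝒮 → ℝ) := (0, fun _ _ => 0) with hq₀def
    have hq₀Δ : q₀ ∈ Δset K 𝒮 := ⟨le_refl 0, fun k => by simp [hq₀def]⟩
    set h₀ : ℝ := Hfun μ p β q₀.1 q₀.2 with hh₀def
    have hh₀ : 0 ≤ h₀ := hHnn q₀ hq₀Δ
    set R : ℝ := C * h₀ + 1 with hRdef
    have hR : 0 < R := by positivity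
    have hΔclosed : IsClosed (Δset K 𝒮) := by
      have heq : Δset K 𝒮 = {q : ℝ × (Fin K → 𝒮 → ℝ) | 0 ≤ q.1}
          ∩ ⋂ k : Fin K, {q : ℝ × (Fin K → 𝒮 → ℝ) | ∑ s : 𝒮, q.2 k s = 0} := by
        ext q; simp [Δset, Set.mem_iInter, Set.mem_inter_iff]
      rw [heq]
      refine (isClosed_le continuous_const continuous_fst).inter
        (isClosed_iInter fun k => isClosed_eq ?_ continuous_const)
      exact continuous_finset_sum _ fun s _ =>
        (continuous_apply s).comp ((continuous_apply k).comp continuous_snd)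
    have hKcpt : IsCompact (Δset K 𝒮 ∩ Metric.closedBall 0 R) :=
      (isCompact_closedBall (0 : ℝ × (Fin K → 𝒮 → ℝ)) R).inter_left hΔclosed
    have hq₀mem : q₀ ∈ Δset K 𝒮 ∩ Metric.closedBall 0 R := by
      refine ⟨hq₀Δ, ?_⟩
      have hq00 : q₀ = (0 : ℝ × (Fin K → 𝒮 → ℝ)) := rfl
      rw [hq00]
      exact Metric.mem_closedBall_self hR.le
    obtain ⟨q, hqmem, hqmin⟩ := hKcpt.exists_isMinOn ⟨q₀, hq₀mem⟩ hcont.continuousOn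
    refine ⟨q, hqmem.1, fun r hr => ?_⟩
    by_cases hrB : r ∈ Metric.closedBall (0 : ℝ × (Fin K → 𝒮 → ℝ)) R
    · exact isMinOn_iff.mp hqmin r ⟨hr, hrB⟩
    · have hq₀le : Hfun μ p β q.1 q.2 ≤ h₀ := isMinOn_iff.mp hqmin q₀ hq₀mem
      have hrnorm : R < ‖r‖ := by
        simpa [Metric.mem_closedBall, dist_zero_right] using hrB
      have hsumnn' : ∀ (k : Fin K), (0:ℝ) ≤ ∑ s : 𝒮, (r.2 k s) ^ 2 :=
        fun k => Finset.sum_nonneg fun s _ => sq_nonneg _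
      have hs0 : (0:ℝ) ≤ Real.sqrt (r.1 ^ 2 + ∑ k : Fin K, ∑ s : 𝒮, (r.2 k s) ^ 2) :=
        Real.sqrt_nonneg _
      have hnormle : ‖r‖ ≤ Real.sqrt (r.1 ^ 2 + ∑ k : Fin K, ∑ s : 𝒮, (r.2 k s) ^ 2) := by
        rw [Prod.norm_def]
        refine max_le ?_ ?_
        · rw [Real.norm_eq_abs, ← Real.sqrt_sq_eq_abs]
          refine Real.sqrt_le_sqrt ?_
          have h0 : (0:ℝ) ≤ ∑ k : Fin K, ∑ s : 𝒮, (r.2 k s) ^ 2 :=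
            Finset.sum_nonneg fun k _ => hsumnn' k
          linarith
        · rw [pi_norm_le_iff_of_nonneg hs0]
          intro k
          rw [pi_norm_le_iff_of_nonneg hs0]
          intro s
          rw [Real.norm_eq_abs, ← Real.sqrt_sq_eq_abs]
          refine Real.sqrt_le_sqrt ?_
          have h1 : (r.2 k s) ^ 2 ≤ ∑ s' : 𝒮, (r.2 k s') ^ 2 :=
            Finset.single_le_sum (f := fun s' => (r.2 k s') ^ 2)
              (fun s' _ => sq_nonneg _) (Finset.mem_univ s)
          have h2 : (∑ s' : 𝒮, (r.2 k s') ^ 2) ≤ ∑ k' : Fin K, ∑ s' : 𝒮, (r.2 k' s') ^ 2 :=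
            Finset.single_le_sum (fun k' _ => hsumnn' k') (Finset.mem_univ k)
          nlinarith [sq_nonneg r.1]
      have h1 : ‖r‖ ≤ C * Hfun μ p β r.1 r.2 := hnormle.trans (hbound r hr)
      have h2 : h₀ < Hfun μ p β r.1 r.2 := by nlinarith
      linarith

end
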